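/- Let K be a number field of degree d over Q, let n ≥ d, let α ∈ K^n, and let β ∈ K. Then M(α,β) ≤ (d!/|Δ_K|^{1/2}) · H_K(α) · H_K(β). -/

import Mathlib

open scoped NumberField
open IsDedekindDomain

/-- The normalized absolute value of `a ∈ K` at a finite place `v` of the number field `K`,
namely `|a|_v = N(v)^{-v(a)}`, so that the product formula holds. -/
noncomputable def finAbs {K : Type*} [Field K] [NumberField K]
    (v : HeightOneSpectrum (𝓞 K)) (a : K) : ℝ :=
  (WithZeroMulInt.toNNReal
    (by
      simp only [ne_eq, Nat.cast_eq_zero]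
      exact fun h => v.ne_bot (Ideal.absNorm_eq_zero_iff.mp h) :
        (Ideal.absNorm v.asIdeal : NNReal) ≠ 0)
    (v.valuation K a) : ℝ)

/-- The inhomogeneous Weil height `H_K` of a tuple of elements of `K`, relative to `K`:
`H_K(γ) = ∏_v max{1, |γ_1|_v, …, |γ_m|_v}` over all places of `K`, where at an infinite
place `w` the normalized absolute value is `w(·)^mult w`. -/
noncomputable def heightK {K : Type*} [Field K] [NumberField K] {m : ℕ} (γ : Fin m → K) : ℝ :=
  (∏ w : NumberField.InfinitePlace K, max 1 (⨆ i, w (γ i)) ^ w.mult) *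
  ∏ᶠ v : HeightOneSpectrum (𝓞 K), max 1 (⨆ i, finAbs v (γ i))

/-- `disc(γ_I)`: the discriminant of the sub-`d`-tuple of `γ` indexed by the subset `I`
of cardinality `d`, i.e. the square of the determinant of the matrix `(σ_i(γ_{i_j}))`,
where `σ_1, …, σ_d` are the embeddings `K → ℂ`. -/
noncomputable def subDisc {K : Type*} [Field K] {d m : ℕ} (σ : Fin d → (K →+* ℂ))
    (γ : Fin m → K) (I : Finset (Fin m)) (hI : I.card = d) : ℂ :=
  (Matrix.of fun i j => σ i (γ ((I.orderIsoOfFin hI j : Fin m)))).det ^ 2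

/-- `D(α) = (1/|Δ_K|) ∑_{I ⊆ [n], |I| = d} |disc(α_I)|`. -/
noncomputable def Dht {K : Type*} [Field K] [NumberField K] {d n : ℕ}
    (σ : Fin d → (K →+* ℂ)) (α : Fin n → K) : ℝ :=
  (1 / |(NumberField.discr K : ℝ)|) *
    ∑ I ∈ (Finset.powersetCard d (Finset.univ : Finset (Fin n))).attach,
      ‖subDisc σ α I.1 (Finset.mem_powersetCard.mp I.2).2‖

/-- `M(α,β) = (1/|Δ_K|^{1/2}) max_{I ⊆ [n+1], |I| = d} |disc(α(β)_I)|^{1/2}`, where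
`α(β) = (α_1, …, α_n, β)`. -/
noncomputable def Mht {K : Type*} [Field K] [NumberField K] {d n : ℕ}
    (σ : Fin d → (K →+* ℂ)) (α : Fin n → K) (β : K) : ℝ :=
  (1 / Real.sqrt |(NumberField.discr K : ℝ)|) *
    ⨆ I : {I : Finset (Fin (n + 1)) // I ∈ Finset.powersetCard d Finset.univ},
      Real.sqrt (‖subDisc σ (Fin.snoc α β) I.1
        (Finset.mem_powersetCard.mp I.2).2‖)

lemma one_le_finprod_real {ι : Type*} {f : ι → ℝ} (hf : ∀ i, 1 ≤ f i) :
    1 ≤ ∏ᶠ i, f i := by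
  by_cases h : (Function.mulSupport f).Finite
  · rw [finprod_eq_prod f h]
    have := Finset.prod_le_prod (s := h.toFinset) (f := fun _ => (1:ℝ)) (g := f)
      (fun i _ => zero_le_one) (fun i _ => hf i)
    simpa using this
  · rw [finprod_of_infinite_mulSupport h]

lemma prod_emb_eq_prod_places {K : Type*} [Field K] [NumberField K]
    (f : NumberField.InfinitePlace K → ℝ) :
    ∏ φ : K →+* ℂ, f (NumberField.InfinitePlace.mk φ) =
      ∏ w : NumberField.InfinitePlace K, f w ^ w.mult := by
  classical
  rw [← Finset.prod_fiberwise' Finset.univ NumberField.InfinitePlace.mk f]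
  refine Finset.prod_congr rfl fun w _ => ?_
  rw [Finset.prod_const, NumberField.InfinitePlace.card_filter_mk_eq]

lemma key_bound {K : Type*} [Field K] [NumberField K] {d n : ℕ}
    (σ : Fin d → (K →+* ℂ)) (hσ : Function.Bijective σ)
    (α : Fin n → K) (β : K) (I : Finset (Fin (n + 1))) (hI : I.card = d) :
    Real.sqrt (‖subDisc σ (Fin.snoc α β) I hI‖) ≤
      (d.factorial : ℝ) *
        (∏ w : NumberField.InfinitePlace K, max 1 (⨆ i, w (α i)) ^ w.mult) *
        (∏ w : NumberField.InfinitePlace K, max 1 (w β) ^ w.mult) := by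
  classical
  set A' : Fin d → ℝ := fun r => max 1 (⨆ j, ‖σ r (α j)‖) with hA'
  set B' : Fin d → ℝ := fun r => max 1 (‖σ r β‖) with hB'
  have hA1 : ∀ r, (1:ℝ) ≤ A' r := fun r => le_max_left _ _
  have hB1 : ∀ r, (1:ℝ) ≤ B' r := fun r => le_max_left _ _
  have hentry : ∀ r (k : Fin (n+1)),
      ‖σ r ((Fin.snoc α β : Fin (n+1) → K) k)‖ ≤ A' r * B' r := by
    intro r k
    induction k using Fin.lastCases with
    | last =>
        rw [Fin.snoc_last]
        calc ‖σ r β‖ ≤ B' r := le_max_right _ _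
          _ ≤ A' r * B' r := le_mul_of_one_le_left (le_trans zero_le_one (hB1 r)) (hA1 r)
    | cast i =>
        rw [Fin.snoc_castSucc]
        calc ‖σ r (α i)‖ ≤ ⨆ j, ‖σ r (α j)‖ :=
              le_ciSup (f := fun j => ‖σ r (α j)‖) (Set.Finite.bddAbove (Set.finite_range _)) i
          _ ≤ A' r := le_max_right _ _
          _ ≤ A' r * B' r := le_mul_of_one_le_right (le_trans zero_le_one (hA1 r)) (hB1 r)
  set M : Matrix (Fin d) (Fin d) ℂ :=
    Matrix.of fun i j => σ i ((Fin.snoc α β : Fin (n+1) → K) ((I.orderIsoOfFin hI j : Fin (n+1)))) with hM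
  have hdet : ‖M.det‖ ≤ (d.factorial : ℝ) * ∏ r, (A' r * B' r) := by
    rw [Matrix.det_apply]
    calc ‖∑ τ : Equiv.Perm (Fin d), Equiv.Perm.sign τ • ∏ i, M (τ i) i‖
        ≤ ∑ τ : Equiv.Perm (Fin d), ‖Equiv.Perm.sign τ • ∏ i, M (τ i) i‖ :=
          norm_sum_le _ _
      _ ≤ ∑ _τ : Equiv.Perm (Fin d), ∏ r, (A' r * B' r) := by
          refine Finset.sum_le_sum fun τ _ => ?_
          have h1 : ‖Equiv.Perm.sign τ • ∏ i, M (τ i) i‖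
              = ‖∏ i, M (τ i) i‖ := by
            rcases Int.units_eq_one_or (Equiv.Perm.sign τ) with h | h <;>
              simp [h, Units.smul_def]
          rw [h1, norm_prod]
          calc ∏ i, ‖M (τ i) i‖
              ≤ ∏ i, (A' (τ i) * B' (τ i)) := by
                refine Finset.prod_le_prod (fun i _ => norm_nonneg _)
                  (fun i _ => ?_)
                exact hentry (τ i) _
            _ = ∏ r, (A' r * B' r) := Equiv.prod_comp τ (fun r => A' r * B' r)
      _ = (d.factorial : ℝ) * ∏ r, (A' r * B' r) := by
          rw [Finset.sum_const, Finset.card_univ, Fintype.card_perm, Fintype.card_fin,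
            nsmul_eq_mul]
  have hsq : Real.sqrt (‖subDisc σ (Fin.snoc α β) I hI‖)
      = ‖M.det‖ := by
    rw [subDisc, norm_pow]
    exact Real.sqrt_sq (norm_nonneg _)
  rw [hsq]
  have hprod : ∏ r, (A' r * B' r)
      = (∏ w : NumberField.InfinitePlace K, max 1 (⨆ i, w (α i)) ^ w.mult) *
        (∏ w : NumberField.InfinitePlace K, max 1 (w β) ^ w.mult) := by
    rw [Finset.prod_mul_distrib]
    congr 1
    · have := Fintype.prod_bijective σ hσ A'
        (fun φ => max 1 (⨆ j, ‖φ (α j)‖)) (fun i => rfl)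
      rw [this, ← prod_emb_eq_prod_places (fun w => max 1 (⨆ i, w (α i)))]
      rfl
    · have := Fintype.prod_bijective σ hσ B'
        (fun φ => max 1 (‖φ β‖)) (fun i => rfl)
      rw [this, ← prod_emb_eq_prod_places (fun w => max 1 (w β))]
      rfl
  rw [mul_assoc, ← hprod]
  exact hdet

/-- **Lemma 3.1(3), second bound (Fukshansky–Shi).** Let `K` be a number field of degree
`d` with embeddings `σ_1, …, σ_d : K → ℂ`, let `n ≥ d`, `α ∈ K^n` and `β ∈ K`. Then
`M(α,β) ≤ (d!/|Δ_K|^{1/2}) H_K(α) H_K(β)`. -/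
theorem Mht_le {K : Type*} [Field K] [NumberField K] {d n : ℕ}
    (σ : Fin d → (K →+* ℂ)) (hσ : Function.Injective σ)
    (hd : Module.finrank ℚ K = d) (hn : d ≤ n)
    (α : Fin n → K) (β : K) :
    Mht σ α β ≤ ((Nat.factorial d : ℝ) / Real.sqrt |(NumberField.discr K : ℝ)|) *
      heightK α * heightK ![β] := by
  classical
  have hbij : Function.Bijective σ := by
    rw [Fintype.bijective_iff_injective_and_card]
    exact ⟨hσ, by rw [Fintype.card_fin, NumberField.Embeddings.card K ℂ, hd]⟩
  set Δ : ℝ := Real.sqrt |(NumberField.discr K : ℝ)| with hΔdef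
  have hΔpos : 0 < Δ := Real.sqrt_pos.mpr (abs_pos.mpr
    (by exact_mod_cast NumberField.discr_ne_zero K))
  set Pα : ℝ := ∏ w : NumberField.InfinitePlace K, max 1 (⨆ i, w (α i)) ^ w.mult with hPα
  set Pβ : ℝ := ∏ w : NumberField.InfinitePlace K, max 1 (w β) ^ w.mult with hPβ
  have hPα1 : (1:ℝ) ≤ Pα := by
    calc (1:ℝ) = ∏ _w : NumberField.InfinitePlace K, 1 := by simp
      _ ≤ Pα := Finset.prod_le_prod (fun _ _ => zero_le_one)
          (fun w _ => one_le_pow₀ (le_max_left _ _))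
  have hPβ1 : (1:ℝ) ≤ Pβ := by
    calc (1:ℝ) = ∏ _w : NumberField.InfinitePlace K, 1 := by simp
      _ ≤ Pβ := Finset.prod_le_prod (fun _ _ => zero_le_one)
          (fun w _ => one_le_pow₀ (le_max_left _ _))
  -- relate heights to P's
  have hhα : Pα ≤ heightK α := by
    rw [heightK, ← hPα]
    exact le_mul_of_one_le_right (le_trans zero_le_one hPα1)
      (one_le_finprod_real fun v => le_max_left _ _)
  have hhβ : Pβ ≤ heightK ![β] := by
    rw [heightK]
    have h1 : (∏ w : NumberField.InfinitePlace K,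
        max 1 (⨆ i, w (![β] i)) ^ w.mult) = Pβ := by
      rw [hPβ]
      refine Finset.prod_congr rfl fun w _ => ?_
      congr 1
      rw [ciSup_unique]
      simp
    rw [h1]
    exact le_mul_of_one_le_right (le_trans zero_le_one hPβ1)
      (one_le_finprod_real fun v => le_max_left _ _)
  have hne : Nonempty {I : Finset (Fin (n + 1)) // I ∈ Finset.powersetCard d Finset.univ} := by
    obtain ⟨t, -, ht⟩ := Finset.exists_subset_card_eq
      (s := (Finset.univ : Finset (Fin (n+1)))) (n := d)
      (by rw [Finset.card_univ, Fintype.card_fin]; omega)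
    exact ⟨⟨t, Finset.mem_powersetCard.mpr ⟨Finset.subset_univ _, ht⟩⟩⟩
  have hsup : (⨆ I : {I : Finset (Fin (n + 1)) // I ∈ Finset.powersetCard d Finset.univ},
      Real.sqrt (‖subDisc σ (Fin.snoc α β) I.1
        (Finset.mem_powersetCard.mp I.2).2‖))
      ≤ (d.factorial : ℝ) * Pα * Pβ := by
    refine ciSup_le fun I => ?_
    exact key_bound σ hbij α β I.1 (Finset.mem_powersetCard.mp I.2).2
  have hheightαnn : 0 ≤ heightK α := le_trans zero_le_one (le_trans hPα1 hhα)
  calc Mht σ α β ≤ (1 / Δ) * ((d.factorial : ℝ) * Pα * Pβ) := by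
        rw [Mht]
        exact mul_le_mul_of_nonneg_left hsup (by positivity)
    _ ≤ (1 / Δ) * ((d.factorial : ℝ) * heightK α * heightK ![β]) := by
        refine mul_le_mul_of_nonneg_left ?_ (by positivity)
        refine mul_le_mul (mul_le_mul_of_nonneg_left hhα (by positivity)) hhβ
          (le_trans zero_le_one hPβ1) (by positivity)
    _ = ((Nat.factorial d : ℝ) / Δ) * heightK α * heightK ![β] := by ring
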